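/- arXiv:1703.01768 — 8 statements merged into one kernel-verified Lean document; each statement's English description precedes it below -/
import Mathlib

section
/- If Θ_i, Θ_j, Θ_k ∈ [0, π) satisfy Θ_i + Θ_j + Θ_k > π, Θ_i + Θ_j < π + Θ_k, Θ_j + Θ_k < π + Θ_i, and Θ_k + Θ_i < π + Θ_j, then 1 - (cos²Θ_i + cos²Θ_j + cos²Θ_k) - 2 cos Θ_i cos Θ_j cos Θ_k > 0. -/
/-!
The Gram determinant factors as
`ξ = -4 cos(s/2) cos(s/2 - Θi) cos(s/2 - Θj) cos(s/2 - Θk)` with `s = Θi + Θj + Θk`.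
The hypotheses force `s/2 ∈ (π/2, 3π/2)` and `s/2 - Θη ∈ (-π/2, π/2)`,
so the first cosine is negative and the other three are positive.
-/

open Real

lemma gram_det_eq_neg_cos_add_mul_cos_sub (a b c : ℝ) :
    1 - (cos a ^ 2 + cos b ^ 2 + cos c ^ 2) - 2 * cos a * cos b * cos c
      = -((cos (b + c) + cos a) * (cos (b - c) + cos a)) := by
  rw [cos_add, cos_sub]
  linear_combination (cos c ^ 2 - 1) * sin_sq_add_cos_sq b - sin b ^ 2 * sin_sq_add_cos_sq c

lemma gram_det_eq_neg_four_mul_cos_half (a b c : ℝ) :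
    1 - (cos a ^ 2 + cos b ^ 2 + cos c ^ 2) - 2 * cos a * cos b * cos c
      = -(4 * cos ((a + b + c) / 2) * cos ((b + c - a) / 2) * cos ((c + a - b) / 2)
          * cos ((a + b - c) / 2)) := by
  rw [gram_det_eq_neg_cos_add_mul_cos_sub, cos_add_cos, cos_add_cos,
    ← cos_neg ((b - c - a) / 2)]
  ring_nf

theorem gram_det_pos_of_spherical_triangle_general
    (Θi Θj Θk : ℝ)
    (hsum : π < Θi + Θj + Θk)
    (hij : Θi + Θj < π + Θk) (hjk : Θj + Θk < π + Θi) (hki : Θk + Θi < π + Θj) :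
    0 < 1 - (Real.cos Θi ^ 2 + Real.cos Θj ^ 2 + Real.cos Θk ^ 2)
        - 2 * Real.cos Θi * Real.cos Θj * Real.cos Θk := by
  rw [gram_det_eq_neg_four_mul_cos_half, neg_pos]
  have hs : cos ((Θi + Θj + Θk) / 2) < 0 :=
    cos_neg_of_pi_div_two_lt_of_lt (by linarith) (by linarith)
  have hi : 0 < cos ((Θj + Θk - Θi) / 2) := cos_pos_of_mem_Ioo ⟨by linarith, by linarith⟩
  have hj : 0 < cos ((Θk + Θi - Θj) / 2) := cos_pos_of_mem_Ioo ⟨by linarith, by linarith⟩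
  have hk : 0 < cos ((Θi + Θj - Θk) / 2) := cos_pos_of_mem_Ioo ⟨by linarith, by linarith⟩
  exact mul_neg_of_neg_of_pos (mul_neg_of_neg_of_pos
    (mul_neg_of_neg_of_pos (by linarith) hi) hj) hk

theorem gram_det_pos_of_spherical_triangle
    (Θi Θj Θk : ℝ)
    (hi : Θi ∈ Set.Ico 0 π) (hj : Θj ∈ Set.Ico 0 π) (hk : Θk ∈ Set.Ico 0 π)
    (hsum : π < Θi + Θj + Θk)
    (hij : Θi + Θj < π + Θk) (hjk : Θj + Θk < π + Θi) (hki : Θk + Θi < π + Θj) :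
    0 < 1 - (Real.cos Θi ^ 2 + Real.cos Θj ^ 2 + Real.cos Θk ^ 2)
        - 2 * Real.cos Θi * Real.cos Θj * Real.cos Θk :=
  gram_det_pos_of_spherical_triangle_general Θi Θj Θk hsum hij hjk hki
end

section
/- Let Θ_i, Θ_j, Θ_k ∈ [0, π) satisfy either (a) Θ_i + Θ_j + Θ_k ≤ π, or (b) Θ_i + Θ_j < π + Θ_k, Θ_j + Θ_k < π + Θ_i, Θ_k + Θ_i < π + Θ_j. For any positive reals r_i, r_j, r_k, define l_i > 0 by cosh l_i = cosh r_j cosh r_k + cos Θ_i sinh r_j sinh r_k, and define l_j, l_k cyclically. Then l_i, l_j, l_k satisfy the strict triangle inequalities: l_i < l_j + l_k, l_j < l_k + l_i, l_k < l_i + l_j. -/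
/-!
Write `X = cosh lᵢ`, `Y = cosh lⱼ`, `Z = cosh lₖ`. The three strict triangle inequalities together
say `cosh (lⱼ - lₖ) < X < cosh (lⱼ + lₖ)`, i.e. that the Gram determinant
`1 + 2XYZ - X² - Y² - Z² = sinh² lⱼ sinh² lₖ - (X - YZ)²` is positive.

Let `Γ` be the symmetric matrix with unit diagonal and off-diagonal entries `-cos Θ`, and let
`p = (coth rᵢ, coth rⱼ, coth rₖ)`. The Gram determinant equals
`(sinh rᵢ sinh rⱼ sinh rₖ)² det (p pᵀ - Γ) = (sinh rᵢ sinh rⱼ sinh rₖ)² (pᵀ adj Γ p - det Γ)`.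
If `Θᵢ + Θⱼ + Θₖ ≤ π`, every entry of `adj Γ` is nonnegative, so as `p ≥ 1` the form is at least
its value at `(1, 1, 1)`, which exceeds `det Γ` by `2 (1 + cos Θᵢ)(1 + cos Θⱼ)(1 + cos Θₖ)`.
Otherwise the second condition makes `det Γ > 0`, and completing the square in the first
coordinate writes `(1 - cos² Θᵢ)(pᵀ adj Γ p - det Γ)` as a sum of nonnegative terms, one of them
strictly positive because `coth rₖ > 1`.
-/

open Real

/-- The determinant of the symmetric matrix with unit diagonal and off-diagonal entries
`x, y, z`. -/
def gramDet (x y z : ℝ) : ℝ := 1 + 2 * x * y * z - x ^ 2 - y ^ 2 - z ^ 2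

/-- `p ↦ pᵀ (adj Γ) p` for the symmetric matrix `Γ` with unit diagonal and off-diagonal entries
`-c₁, -c₂, -c₃`, whose determinant is `gramDet (-c₁) (-c₂) (-c₃)`. -/
def adjugateForm (c₁ c₂ c₃ x y z : ℝ) : ℝ :=
  (1 - c₁ ^ 2) * x ^ 2 + (1 - c₂ ^ 2) * y ^ 2 + (1 - c₃ ^ 2) * z ^ 2
    + 2 * (c₁ + c₂ * c₃) * y * z + 2 * (c₂ + c₃ * c₁) * z * x + 2 * (c₃ + c₁ * c₂) * x * y

theorem gramDet_cosh_eq (x y z : ℝ) :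
    gramDet (cosh x) (cosh y) (cosh z)
      = (sinh y * sinh z) ^ 2 - (cosh x - cosh y * cosh z) ^ 2 := by
  simp only [gramDet, mul_pow, sinh_sq]
  ring

theorem lt_add_of_gramDet_cosh_pos {x y z : ℝ} (hx : 0 ≤ x) (hy : 0 ≤ y) (hz : 0 ≤ z)
    (h : 0 < gramDet (cosh x) (cosh y) (cosh z)) :
    x < y + z ∧ y < z + x ∧ z < x + y := by
  rw [gramDet_cosh_eq, sub_pos] at h
  have hsinh : 0 ≤ sinh y * sinh z := mul_nonneg (sinh_nonneg_iff.2 hy) (sinh_nonneg_iff.2 hz)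
  obtain ⟨hlo, hhi⟩ := abs_lt.1 (abs_lt_of_sq_lt_sq h hsinh)
  have hsub : |y - z| < |x| := cosh_lt_cosh.1 (by rw [cosh_sub]; linarith)
  have hadd : |x| < |y + z| := cosh_lt_cosh.1 (by rw [cosh_add]; linarith)
  rw [abs_of_nonneg hx, abs_lt] at hsub
  rw [abs_of_nonneg hx, abs_of_nonneg (add_nonneg hy hz)] at hadd
  exact ⟨hadd, by linarith, by linarith⟩

theorem sinh_sq_mul_sq_div_sub_one {r : ℝ} (hr : r ≠ 0) :
    sinh r ^ 2 * ((cosh r / sinh r) ^ 2 - 1) = 1 := by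
  have hs : sinh r ≠ 0 := sinh_ne_zero.2 hr
  rw [div_pow, mul_sub, mul_div_cancel₀ _ (pow_ne_zero 2 hs), mul_one, cosh_sq]
  ring

theorem one_lt_cosh_div_sinh {r : ℝ} (hr : 0 < r) : 1 < cosh r / sinh r :=
  (one_lt_div (sinh_pos_iff.2 hr)).2 (sinh_lt_cosh r)

theorem gramDet_circle_eq {r₁ r₂ r₃ : ℝ} (h₁ : r₁ ≠ 0) (h₂ : r₂ ≠ 0) (h₃ : r₃ ≠ 0)
    (c₁ c₂ c₃ : ℝ) :
    gramDet (cosh r₂ * cosh r₃ + c₁ * sinh r₂ * sinh r₃)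
        (cosh r₃ * cosh r₁ + c₂ * sinh r₃ * sinh r₁) (cosh r₁ * cosh r₂ + c₃ * sinh r₁ * sinh r₂)
      = (sinh r₁ * sinh r₂ * sinh r₃) ^ 2 * (adjugateForm c₁ c₂ c₃ (cosh r₁ / sinh r₁)
          (cosh r₂ / sinh r₂) (cosh r₃ / sinh r₃) - gramDet (-c₁) (-c₂) (-c₃)) := by
  have hcosh : ∀ r, r ≠ 0 → cosh r = sinh r * (cosh r / sinh r) := fun r hr =>
    (mul_div_cancel₀ _ (sinh_ne_zero.2 hr)).symm
  have ea := hcosh r₁ h₁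
  have eb := hcosh r₂ h₂
  have ec := hcosh r₃ h₃
  have ha := sinh_sq_mul_sq_div_sub_one h₁
  have hb := sinh_sq_mul_sq_div_sub_one h₂
  have hc := sinh_sq_mul_sq_div_sub_one h₃
  generalize cosh r₁ / sinh r₁ = x at ea ha ⊢
  generalize cosh r₂ / sinh r₂ = y at eb hb ⊢
  generalize cosh r₃ / sinh r₃ = z at ec hc ⊢
  rw [ea, eb, ec]
  generalize sinh r₁ = a at ha ⊢
  generalize sinh r₂ = b at hb ⊢
  generalize sinh r₃ = c at hc ⊢
  -- the matrix determinant lemma `det (p pᵀ - Γ) = pᵀ (adj Γ) p - det Γ`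
  have hdet : adjugateForm c₁ c₂ c₃ x y z - gramDet (-c₁) (-c₂) (-c₃)
      = (x ^ 2 - 1) * (y ^ 2 - 1) * (z ^ 2 - 1) + 2 * (y * z + c₁) * (z * x + c₂) * (x * y + c₃)
        - (x ^ 2 - 1) * (y * z + c₁) ^ 2 - (y ^ 2 - 1) * (z * x + c₂) ^ 2
        - (z ^ 2 - 1) * (x * y + c₃) ^ 2 := by
    unfold adjugateForm gramDet; ring
  rw [hdet, gramDet]
  linear_combination (b ^ 2 * c ^ 2 * (y * z + c₁) ^ 2 - 1) * ha
    + (c ^ 2 * a ^ 2 * (z * x + c₂) ^ 2 - a ^ 2 * (x ^ 2 - 1)) * hb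
    + (a ^ 2 * b ^ 2 * (x * y + c₃) ^ 2 - a ^ 2 * (x ^ 2 - 1) * b ^ 2 * (y ^ 2 - 1)) * hc

theorem adjugateForm_one_one_one_sub_gramDet (c₁ c₂ c₃ : ℝ) :
    adjugateForm c₁ c₂ c₃ 1 1 1 - gramDet (-c₁) (-c₂) (-c₃)
      = 2 * (1 + c₁) * (1 + c₂) * (1 + c₃) := by
  unfold adjugateForm gramDet; ring

theorem adjugateForm_one_one_one_le {c₁ c₂ c₃ x y z : ℝ}
    (hc₁ : c₁ ∈ Set.Icc (-1) 1) (hc₂ : c₂ ∈ Set.Icc (-1) 1) (hc₃ : c₃ ∈ Set.Icc (-1) 1)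
    (h₁ : 0 ≤ c₁ + c₂ * c₃) (h₂ : 0 ≤ c₂ + c₃ * c₁) (h₃ : 0 ≤ c₃ + c₁ * c₂)
    (hx : 1 ≤ x) (hy : 1 ≤ y) (hz : 1 ≤ z) :
    adjugateForm c₁ c₂ c₃ 1 1 1 ≤ adjugateForm c₁ c₂ c₃ x y z := by
  have hdiag : ∀ c ∈ Set.Icc (-1 : ℝ) 1, 0 ≤ 1 - c ^ 2 := fun c hc => by
    rw [sub_nonneg, sq_le_one_iff_abs_le_one, abs_le]; exact hc
  have hxy := one_le_mul_of_one_le_of_one_le hx hy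
  have hyz := one_le_mul_of_one_le_of_one_le hy hz
  have hzx := one_le_mul_of_one_le_of_one_le hz hx
  unfold adjugateForm
  nlinarith [mul_le_mul_of_nonneg_left (one_le_pow₀ hx : 1 ≤ x ^ 2) (hdiag c₁ hc₁),
    mul_le_mul_of_nonneg_left (one_le_pow₀ hy : 1 ≤ y ^ 2) (hdiag c₂ hc₂),
    mul_le_mul_of_nonneg_left (one_le_pow₀ hz : 1 ≤ z ^ 2) (hdiag c₃ hc₃),
    mul_le_mul_of_nonneg_left hyz h₁, mul_le_mul_of_nonneg_left hzx h₂,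
    mul_le_mul_of_nonneg_left hxy h₃]

theorem gramDet_neg_lt_adjugateForm_of_cofactor_nonneg {c₁ c₂ c₃ x y z : ℝ}
    (hc₁ : c₁ ∈ Set.Ioc (-1) 1) (hc₂ : c₂ ∈ Set.Ioc (-1) 1) (hc₃ : c₃ ∈ Set.Ioc (-1) 1)
    (h₁ : 0 ≤ c₁ + c₂ * c₃) (h₂ : 0 ≤ c₂ + c₃ * c₁) (h₃ : 0 ≤ c₃ + c₁ * c₂)
    (hx : 1 ≤ x) (hy : 1 ≤ y) (hz : 1 ≤ z) :
    gramDet (-c₁) (-c₂) (-c₃) < adjugateForm c₁ c₂ c₃ x y z := by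
  have hmono := adjugateForm_one_one_one_le (Set.Ioc_subset_Icc_self hc₁)
    (Set.Ioc_subset_Icc_self hc₂) (Set.Ioc_subset_Icc_self hc₃) h₁ h₂ h₃ hx hy hz
  have hpos : 0 < 2 * (1 + c₁) * (1 + c₂) * (1 + c₃) :=
    mul_pos (mul_pos (mul_pos two_pos (neg_lt_iff_pos_add'.1 hc₁.1))
      (neg_lt_iff_pos_add'.1 hc₂.1)) (neg_lt_iff_pos_add'.1 hc₃.1)
  linarith [adjugateForm_one_one_one_sub_gramDet c₁ c₂ c₃]

theorem one_sub_sq_mul_adjugateForm_sub_gramDet (c₁ c₂ c₃ x y z : ℝ) :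
    (1 - c₁ ^ 2) * (adjugateForm c₁ c₂ c₃ x y z - gramDet (-c₁) (-c₂) (-c₃))
      = ((1 - c₁ ^ 2) * x + (c₃ + c₁ * c₂) * y + (c₂ + c₃ * c₁) * z) ^ 2
        + gramDet (-c₁) (-c₂) (-c₃) * ((y + c₁ * z) ^ 2 + (1 - c₁ ^ 2) * (z ^ 2 - 1)) := by
  unfold adjugateForm gramDet; ring

theorem gramDet_neg_lt_adjugateForm_of_gramDet_pos {c₁ c₂ c₃ x y z : ℝ} (hc₁ : c₁ ^ 2 < 1)
    (hΓ : 0 < gramDet (-c₁) (-c₂) (-c₃)) (hz : 1 < z) :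
    gramDet (-c₁) (-c₂) (-c₃) < adjugateForm c₁ c₂ c₃ x y z := by
  have hc₁' : 0 < 1 - c₁ ^ 2 := sub_pos.2 hc₁
  have hz' : 0 < z ^ 2 - 1 := sub_pos.2 (one_lt_pow₀ hz two_ne_zero)
  have : 0 < (1 - c₁ ^ 2) * (adjugateForm c₁ c₂ c₃ x y z - gramDet (-c₁) (-c₂) (-c₃)) := by
    rw [one_sub_sq_mul_adjugateForm_sub_gramDet]; positivity
  exact sub_pos.1 (pos_of_mul_pos_right this hc₁'.le)

theorem neg_one_lt_cos_of_mem_Ico {θ : ℝ} (hθ : θ ∈ Set.Ico 0 π) : -1 < cos θ := by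
  simpa only [cos_pi] using cos_lt_cos_of_nonneg_of_le_pi hθ.1 le_rfl hθ.2

theorem cos_sq_lt_one_of_mem_Ioo {θ : ℝ} (hθ : θ ∈ Set.Ioo 0 π) : cos θ ^ 2 < 1 := by
  rw [cos_sq']
  exact sub_lt_self 1 (pow_pos (sin_pos_of_mem_Ioo hθ) 2)

theorem cos_add_cos_mul_cos_nonneg {α β γ : ℝ} (hα : 0 ≤ α) (hβ : 0 ≤ β) (hγ : 0 ≤ γ)
    (hsum : α + β + γ ≤ π) : 0 ≤ cos α + cos β * cos γ := by
  have hle : cos (π - α) ≤ cos (β + γ) :=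
    cos_le_cos_of_nonneg_of_le_pi (by linarith) (by linarith) (by linarith)
  have hsin : 0 ≤ sin β * sin γ :=
    mul_nonneg (sin_nonneg_of_nonneg_of_le_pi hβ (by linarith))
      (sin_nonneg_of_nonneg_of_le_pi hγ (by linarith))
  rw [cos_pi_sub, cos_add] at hle
  linarith

theorem gramDet_neg_cos_eq (α β γ : ℝ) :
    gramDet (-cos α) (-cos β) (-cos γ)
      = -((cos α + cos (β + γ)) * (cos α + cos (β - γ))) := by
  rw [gramDet, cos_add, cos_sub]
  linear_combination (cos β ^ 2 - 1) * sin_sq_add_cos_sq γ - sin γ ^ 2 * sin_sq_add_cos_sq β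

theorem gramDet_neg_cos_pos {α β γ : ℝ} (hsum : π < α + β + γ)
    (h₃ : α + β < π + γ) (h₁ : β + γ < π + α) (h₂ : γ + α < π + β) :
    0 < gramDet (-cos α) (-cos β) (-cos γ) := by
  have hcos : ∀ t, -π < t → t < π → 0 < cos (t / 2) := fun t h h' =>
    cos_pos_of_mem_Ioo ⟨by linarith, by linarith⟩
  have hσ : cos ((α + (β + γ)) / 2) < 0 :=
    cos_neg_of_pi_div_two_lt_of_lt (by linarith) (by linarith)
  rw [gramDet_neg_cos_eq, cos_add_cos, cos_add_cos, neg_pos]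
  exact mul_neg_of_neg_of_pos
    (mul_neg_of_neg_of_pos (mul_neg_of_pos_of_neg two_pos hσ)
      (hcos _ (by linarith) (by linarith)))
    (mul_pos (mul_pos two_pos (hcos _ (by linarith) (by linarith)))
      (hcos _ (by linarith) (by linarith)))

theorem three_circle_triangle_inequalities
    (Θi Θj Θk : ℝ)
    (hi : Θi ∈ Set.Ico 0 π) (hj : Θj ∈ Set.Ico 0 π) (hk : Θk ∈ Set.Ico 0 π)
    (hcond : (Θi + Θj + Θk ≤ π) ∨
      (Θi + Θj < π + Θk ∧ Θj + Θk < π + Θi ∧ Θk + Θi < π + Θj))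
    (ri rj rk : ℝ) (hri : 0 < ri) (hrj : 0 < rj) (hrk : 0 < rk)
    (li lj lk : ℝ) (hli : 0 < li) (hlj : 0 < lj) (hlk : 0 < lk)
    (hcoshi : Real.cosh li = Real.cosh rj * Real.cosh rk + Real.cos Θi * Real.sinh rj * Real.sinh rk)
    (hcoshj : Real.cosh lj = Real.cosh rk * Real.cosh ri + Real.cos Θj * Real.sinh rk * Real.sinh ri)
    (hcoshk : Real.cosh lk = Real.cosh ri * Real.cosh rj + Real.cos Θk * Real.sinh ri * Real.sinh rj) :
    li < lj + lk ∧ lj < lk + li ∧ lk < li + lj := by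
  have hangles : gramDet (-cos Θi) (-cos Θj) (-cos Θk) < adjugateForm (cos Θi) (cos Θj) (cos Θk)
      (cosh ri / sinh ri) (cosh rj / sinh rj) (cosh rk / sinh rk) := by
    rcases le_or_gt (Θi + Θj + Θk) π with hsum | hsum
    · exact gramDet_neg_lt_adjugateForm_of_cofactor_nonneg
        ⟨neg_one_lt_cos_of_mem_Ico hi, cos_le_one _⟩ ⟨neg_one_lt_cos_of_mem_Ico hj, cos_le_one _⟩
        ⟨neg_one_lt_cos_of_mem_Ico hk, cos_le_one _⟩
        (cos_add_cos_mul_cos_nonneg hi.1 hj.1 hk.1 hsum)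
        (cos_add_cos_mul_cos_nonneg hj.1 hk.1 hi.1 (by linarith))
        (cos_add_cos_mul_cos_nonneg hk.1 hi.1 hj.1 (by linarith))
        (one_lt_cosh_div_sinh hri).le (one_lt_cosh_div_sinh hrj).le (one_lt_cosh_div_sinh hrk).le
    · obtain ⟨hij, hjk, hki⟩ := hcond.resolve_left hsum.not_ge
      exact gramDet_neg_lt_adjugateForm_of_gramDet_pos
        (cos_sq_lt_one_of_mem_Ioo ⟨by linarith, hi.2⟩) (gramDet_neg_cos_pos hsum hij hjk hki)
        (one_lt_cosh_div_sinh hrk)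
  have hgram : 0 < gramDet (cosh li) (cosh lj) (cosh lk) := by
    rw [hcoshi, hcoshj, hcoshk, gramDet_circle_eq hri.ne' hrj.ne' hrk.ne']
    have hsinh := mul_pos (mul_pos (sinh_pos_iff.2 hri) (sinh_pos_iff.2 hrj)) (sinh_pos_iff.2 hrk)
    exact mul_pos (pow_pos hsinh 2) (sub_pos.2 hangles)
  exact lt_add_of_gramDet_cosh_pos hli.le hlj.le hlk.le hgram
end

section
/- In a hyperbolic triangle with sides l_i, l_j, l_k and opposite angles ϑ_i, ϑ_j, ϑ_k, one has cos ϑ_i + cos ϑ_j = sinh(l_i + l_j)·(cosh l_k − cosh(l_i − l_j)) / (sinh l_i sinh l_j sinh l_k), and consequently 0 < cos ϑ_i + cos ϑ_j ≤ sinh(l_i + l_j) sinh(l_k/2) / (sinh l_i sinh l_j cosh(l_k/2)). -/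
/-!
Clearing denominators, the sum of the two law-of-cosines expressions has numerator
`sinh (l_i + l_j) * (cosh l_k - cosh (l_i - l_j))` (an identity in `cosh² = 1 + sinh²`).
The triangle inequality `|l_i - l_j| < l_k` makes it positive, and `cosh (l_i - l_j) ≥ 1` together
with the half-angle formulas `cosh l_k - 1 = 2 sinh² (l_k/2)`, `sinh l_k = 2 sinh (l_k/2) cosh (l_k/2)`
bounds `(cosh l_k - cosh (l_i - l_j)) / sinh l_k` by `tanh (l_k/2)`.
-/

open Real

namespace Real

/-- The cosine of the angle opposite the side `a` of a hyperbolic triangle with sides `a`, `b`, `c`,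
given by the hyperbolic law of cosines. -/
noncomputable def hypCosAngle (a b c : ℝ) : ℝ :=
  (cosh b * cosh c - cosh a) / (sinh b * sinh c)

theorem sinh_add_mul_cosh_sub_cosh_sub (a b c : ℝ) :
    sinh (a + b) * (cosh c - cosh (a - b))
      = (cosh b * cosh c - cosh a) * sinh a + (cosh c * cosh a - cosh b) * sinh b := by
  rw [sinh_add, cosh_sub]
  linear_combination (-(sinh b * cosh b)) * cosh_sq' a - (sinh a * cosh a) * cosh_sq' b

theorem hypCosAngle_add_hypCosAngle {a b c : ℝ} (ha : a ≠ 0) (hb : b ≠ 0) (hc : c ≠ 0) :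
    hypCosAngle a b c + hypCosAngle b c a
      = sinh (a + b) * (cosh c - cosh (a - b)) / (sinh a * sinh b * sinh c) := by
  have := sinh_ne_zero.2 ha
  have := sinh_ne_zero.2 hb
  have := sinh_ne_zero.2 hc
  rw [sinh_add_mul_cosh_sub_cosh_sub, hypCosAngle, hypCosAngle]
  field_simp

theorem hypCosAngle_add_hypCosAngle_pos {a b c : ℝ} (ha : 0 < a) (hb : 0 < b) (hc : 0 < c)
    (hab : |a - b| < c) : 0 < hypCosAngle a b c + hypCosAngle b c a := by
  rw [hypCosAngle_add_hypCosAngle ha.ne' hb.ne' hc.ne']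
  have hcosh : cosh (a - b) < cosh c := cosh_lt_cosh.2 (by rwa [abs_of_pos hc])
  have := sinh_pos_iff.2 ha
  have := sinh_pos_iff.2 hb
  have := sinh_pos_iff.2 hc
  exact div_pos (mul_pos (sinh_pos_iff.2 (add_pos ha hb)) (sub_pos.2 hcosh)) (by positivity)

theorem cosh_sub_cosh_div_sinh_le {c : ℝ} (hc : 0 < c) (x : ℝ) :
    (cosh c - cosh x) / sinh c ≤ sinh (c / 2) / cosh (c / 2) := by
  have hsinh : sinh c = 2 * sinh (c / 2) * cosh (c / 2) := by
    rw [← sinh_two_mul, mul_div_cancel₀ c two_ne_zero]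
  have hcosh : cosh c - 1 = 2 * sinh (c / 2) ^ 2 := by
    rw [← mul_div_cancel₀ c two_ne_zero, cosh_two_mul, cosh_sq, mul_div_cancel₀ c two_ne_zero]
    ring
  have := sinh_pos_iff.2 (half_pos hc)
  have := cosh_pos (c / 2)
  calc (cosh c - cosh x) / sinh c
      ≤ (cosh c - 1) / sinh c :=
        div_le_div_of_nonneg_right (by linarith [one_le_cosh x]) (sinh_pos_iff.2 hc).le
    _ = sinh (c / 2) / cosh (c / 2) := by
        rw [hcosh, hsinh]
        field_simp

theorem hypCosAngle_add_hypCosAngle_le {a b c : ℝ} (ha : 0 < a) (hb : 0 < b) (hc : 0 < c) :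
    hypCosAngle a b c + hypCosAngle b c a
      ≤ sinh (a + b) * sinh (c / 2) / (sinh a * sinh b * cosh (c / 2)) := by
  have := sinh_pos_iff.2 (add_pos ha hb)
  have := sinh_pos_iff.2 ha
  have := sinh_pos_iff.2 hb
  calc hypCosAngle a b c + hypCosAngle b c a
      = sinh (a + b) / (sinh a * sinh b) * ((cosh c - cosh (a - b)) / sinh c) := by
        rw [hypCosAngle_add_hypCosAngle ha.ne' hb.ne' hc.ne', div_mul_div_comm]
    _ ≤ sinh (a + b) / (sinh a * sinh b) * (sinh (c / 2) / cosh (c / 2)) :=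
        mul_le_mul_of_nonneg_left (cosh_sub_cosh_div_sinh_le hc _) (by positivity)
    _ = sinh (a + b) * sinh (c / 2) / (sinh a * sinh b * cosh (c / 2)) := div_mul_div_comm _ _ _ _

end Real

theorem cos_angle_sum_formula_and_bound_general
    (li lj lk ϑi ϑj : ℝ)
    (hli : 0 < li) (hlj : 0 < lj) (hlk : 0 < lk)
    (htri1 : li < lj + lk) (htri2 : lj < lk + li)
    (hcosi : Real.cos ϑi = (Real.cosh lj * Real.cosh lk - Real.cosh li) / (Real.sinh lj * Real.sinh lk))
    (hcosj : Real.cos ϑj = (Real.cosh lk * Real.cosh li - Real.cosh lj) / (Real.sinh lk * Real.sinh li)) :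
    Real.cos ϑi + Real.cos ϑj
        = Real.sinh (li + lj) * (Real.cosh lk - Real.cosh (li - lj))
          / (Real.sinh li * Real.sinh lj * Real.sinh lk) ∧
    0 < Real.cos ϑi + Real.cos ϑj ∧
    Real.cos ϑi + Real.cos ϑj
      ≤ Real.sinh (li + lj) * Real.sinh (lk / 2)
        / (Real.sinh li * Real.sinh lj * Real.cosh (lk / 2)) := by
  have hsum : cos ϑi + cos ϑj = hypCosAngle li lj lk + hypCosAngle lj lk li := by
    rw [hcosi, hcosj, hypCosAngle, hypCosAngle]
  have hij : |li - lj| < lk := abs_sub_lt_iff.2 ⟨by linarith, by linarith⟩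
  rw [hsum]
  exact ⟨hypCosAngle_add_hypCosAngle hli.ne' hlj.ne' hlk.ne',
    hypCosAngle_add_hypCosAngle_pos hli hlj hlk hij, hypCosAngle_add_hypCosAngle_le hli hlj hlk⟩

theorem cos_angle_sum_formula_and_bound
    (li lj lk ϑi ϑj ϑk : ℝ)
    (hli : 0 < li) (hlj : 0 < lj) (hlk : 0 < lk)
    (htri1 : li < lj + lk) (htri2 : lj < lk + li) (htri3 : lk < li + lj)
    (hϑi : ϑi ∈ Set.Ioo 0 π) (hϑj : ϑj ∈ Set.Ioo 0 π) (hϑk : ϑk ∈ Set.Ioo 0 π)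
    (hcosi : Real.cos ϑi = (Real.cosh lj * Real.cosh lk - Real.cosh li) / (Real.sinh lj * Real.sinh lk))
    (hcosj : Real.cos ϑj = (Real.cosh lk * Real.cosh li - Real.cosh lj) / (Real.sinh lk * Real.sinh li))
    (hcosk : Real.cos ϑk = (Real.cosh li * Real.cosh lj - Real.cosh lk) / (Real.sinh li * Real.sinh lj)) :
    Real.cos ϑi + Real.cos ϑj
        = Real.sinh (li + lj) * (Real.cosh lk - Real.cosh (li - lj))
          / (Real.sinh li * Real.sinh lj * Real.sinh lk) ∧
    0 < Real.cos ϑi + Real.cos ϑj ∧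
    Real.cos ϑi + Real.cos ϑj
      ≤ Real.sinh (li + lj) * Real.sinh (lk / 2)
        / (Real.sinh li * Real.sinh lj * Real.cosh (lk / 2)) :=
  cos_angle_sum_formula_and_bound_general li lj lk ϑi ϑj hli hlj hlk htri1 htri2 hcosi hcosj
end

section
/- If three mutually intersecting closed disks D_i, D_j, D_k in the hyperbolic plane have pairwise exterior intersection angles Θ_i, Θ_j, Θ_k ∈ [0, π) (with Θ_i the angle between D_j and D_k etc.), and D_i ∩ D_j ⊆ D_k, then Θ_i + Θ_j ≥ Θ_k + π. -/
/-!
Hyperbolic disks in the upper half-plane are Euclidean disks in `ℂ`, and the hyperbolic cosine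
law for the centres becomes the Euclidean one, `d² = ρ² + ρ'² + 2 ρ ρ' cos Θ`, with the same
angles. Move `c₁` to `0` and `c₂` to `d > 0` by an isometry. Both corners `p ± q i` of `D₁ ∩ D₂`
lie in `D₃`, and the point of `D₁` farthest from `c₃` lies outside `D₃`, hence outside `D₂`.
With `γ = cos Θ` this yields `γᵢ + γⱼ γₖ ≤ 0` and `1 ≤ γᵢ² + γⱼ² + γₖ² + 2 γᵢ γⱼ γₖ`. The latter
says `(γᵢ + γⱼ γₖ)² ≥ sin² Θⱼ sin² Θₖ`, so `cos Θᵢ ≤ -cos (Θⱼ - Θₖ)`, i.e.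
`π ≤ Θᵢ + |Θⱼ - Θₖ|`. The same bound with `i` and `j` exchanged, together with `Θₖ < π`, gives
the claim.
-/

open Real Metric

theorem Real.pi_le_add_abs_sub_of_cos_add_cos_mul_cos_nonpos {α β γ : ℝ}
    (hα : α ∈ Set.Icc 0 π) (hβ : β ∈ Set.Icc 0 π) (hγ : γ ∈ Set.Icc 0 π)
    (hneg : cos α + cos β * cos γ ≤ 0)
    (hgram : 1 ≤ cos α ^ 2 + cos β ^ 2 + cos γ ^ 2 + 2 * cos α * cos β * cos γ) :
    π ≤ α + |β - γ| := by
  have hsin : sin β * sin γ ≤ -(cos α + cos β * cos γ) := by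
    refine (sq_le_sq₀ (mul_nonneg (sin_nonneg_of_mem_Icc hβ) (sin_nonneg_of_mem_Icc hγ))
      (by linarith)).mp ?_
    nlinarith [sin_sq β, sin_sq γ]
  have hcos : cos α ≤ cos (π - |β - γ|) := by
    rw [cos_pi_sub, cos_abs, cos_sub]
    linarith
  have hmem : π - |β - γ| ∈ Set.Icc 0 π := by
    constructor
    · rw [sub_nonneg, abs_sub_le_iff]
      constructor <;> linarith [hβ.1, hβ.2, hγ.1, hγ.2]
    · linarith [abs_nonneg (β - γ)]
  linarith [strictAntiOn_cos.le_iff_ge hα hmem |>.mp hcos]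

/-- In polar form `p = ρ cos φ`, `a = e cos ψ`, `K = 2 ρ e cos ω` this is `cos φ cos ω ≤ cos ψ`,
which holds when the arc `|θ| ≤ φ` of the circle of radius `ρ` lies in the arc `|θ - ψ| ≤ ω`. -/
lemma mul_le_two_mul_sq_mul_of_arc_subset {p q a b ρ e K : ℝ} (hρ : 0 < ρ)
    (hq : 0 ≤ q) (hpq : ρ ^ 2 = p ^ 2 + q ^ 2) (hab : e ^ 2 = a ^ 2 + b ^ 2)
    (hK : -(2 * ρ * e) ≤ K) (hKadd : K ≤ 2 * (p * a + q * b)) (hKsub : K ≤ 2 * (p * a - q * b))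
    (hanti : 0 < e * p + ρ * a) :
    p * K ≤ 2 * ρ ^ 2 * a := by
  rcases le_or_gt 0 p with hp | hp
  · have hK' : K ≤ 2 * (p * a - q * |b|) := by
      rcases abs_cases b with ⟨h, -⟩ | ⟨h, -⟩ <;> rw [h] <;> linarith
    have hqa : 0 ≤ q * a + p * |b| := by
      rcases le_or_gt 0 a with ha | ha
      · positivity
      · have hsq : (q * -a) ^ 2 < (p * |b|) ^ 2 := by
          have := pow_lt_pow_left₀ (by linarith : ρ * -a < e * p) (by nlinarith) two_ne_zero
          nlinarith [sq_abs b]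
        linarith [abs_lt_of_sq_lt_sq hsq (by positivity), le_abs_self (q * -a)]
    calc p * K ≤ p * (2 * (p * a - q * |b|)) := mul_le_mul_of_nonneg_left hK' hp
      _ = 2 * ρ ^ 2 * a - 2 * q * (q * a + p * |b|) := by rw [hpq]; ring
      _ ≤ 2 * ρ ^ 2 * a := sub_le_self _ (by positivity)
  · calc p * K ≤ p * -(2 * ρ * e) := mul_le_mul_of_nonpos_left hK hp.le
      _ ≤ 2 * ρ ^ 2 * a := by nlinarith [mul_pos hρ hanti]

/- In the next two lemmas the centres are `0`, `d` and `a + b i`, and `p ± q i` are the corners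
of `D₁ ∩ D₂`. -/

lemma add_mul_nonpos_of_corners {d p q a b e ρ₁ ρ₂ ρ₃ γ₁₂ γ₁₃ γ₂₃ : ℝ} (hd : 0 < d)
    (hρ₁ : 0 < ρ₁) (hρ₂ : 0 < ρ₂) (hρ₃ : 0 < ρ₃) (hq : 0 ≤ q)
    (hp : 2 * d * p = d ^ 2 + ρ₁ ^ 2 - ρ₂ ^ 2) (hpq : ρ₁ ^ 2 = p ^ 2 + q ^ 2)
    (he : e ^ 2 = a ^ 2 + b ^ 2)
    (h₁₂ : d ^ 2 = ρ₁ ^ 2 + ρ₂ ^ 2 + 2 * γ₁₂ * ρ₁ * ρ₂)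
    (h₁₃ : e ^ 2 = ρ₁ ^ 2 + ρ₃ ^ 2 + 2 * γ₁₃ * ρ₁ * ρ₃)
    (h₂₃ : (a - d) ^ 2 + b ^ 2 = ρ₂ ^ 2 + ρ₃ ^ 2 + 2 * γ₂₃ * ρ₂ * ρ₃)
    (hc₁ : (p - a) ^ 2 + (q - b) ^ 2 ≤ ρ₃ ^ 2) (hc₂ : (p - a) ^ 2 + (-q - b) ^ 2 ≤ ρ₃ ^ 2)
    (hζ : |ρ₃ - ρ₁| < e) (hanti : 0 < e * p + ρ₁ * a) :
    γ₂₃ + γ₁₃ * γ₁₂ ≤ 0 := by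
  have hK : -(2 * ρ₁ * e) ≤ ρ₁ ^ 2 + e ^ 2 - ρ₃ ^ 2 := by nlinarith [le_abs_self (ρ₃ - ρ₁)]
  have harc := mul_le_two_mul_sq_mul_of_arc_subset hρ₁ hq hpq he hK
    (by linear_combination hc₁ + hpq + he) (by linear_combination hc₂ + hpq + he) hanti
  have key : 4 * ρ₁ ^ 2 * ρ₂ * ρ₃ * (γ₂₃ + γ₁₃ * γ₁₂) =
      2 * d * (p * (ρ₁ ^ 2 + e ^ 2 - ρ₃ ^ 2) - 2 * ρ₁ ^ 2 * a) := by
    have hX : 2 * ρ₁ * ρ₃ * γ₁₃ = e ^ 2 - ρ₁ ^ 2 - ρ₃ ^ 2 := by linear_combination -h₁₃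
    have hY : 2 * ρ₁ * ρ₂ * γ₁₂ = d ^ 2 - ρ₁ ^ 2 - ρ₂ ^ 2 := by linear_combination -h₁₂
    have hZ : 2 * ρ₂ * ρ₃ * γ₂₃ = (a - d) ^ 2 + b ^ 2 - ρ₂ ^ 2 - ρ₃ ^ 2 := by
      linear_combination -h₂₃
    calc _ = 2 * ρ₁ ^ 2 * (2 * ρ₂ * ρ₃ * γ₂₃) + (2 * ρ₁ * ρ₃ * γ₁₃) * (2 * ρ₁ * ρ₂ * γ₁₂) := by
            ring
      _ = _ := by
        rw [hX, hY, hZ]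
        linear_combination (-(ρ₁ ^ 2 + e ^ 2 - ρ₃ ^ 2)) * hp - 2 * ρ₁ ^ 2 * he
  refine nonpos_of_mul_nonpos_right ?_ (by positivity : 0 < 4 * ρ₁ ^ 2 * ρ₂ * ρ₃)
  rw [key]
  exact mul_nonpos_of_nonneg_of_nonpos (by positivity) (by linarith)

lemma one_le_sq_add_sq_add_sq_add_two_mul_of_corners {d p q a b ρ₁ ρ₂ ρ₃ γ₁₂ γ₁₃ γ₂₃ : ℝ}
    (hρ₁ : 0 < ρ₁) (hρ₂ : 0 < ρ₂) (hρ₃ : 0 < ρ₃)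
    (hp : 2 * d * p = d ^ 2 + ρ₁ ^ 2 - ρ₂ ^ 2) (hpq : ρ₁ ^ 2 = p ^ 2 + q ^ 2)
    (h₁₂ : d ^ 2 = ρ₁ ^ 2 + ρ₂ ^ 2 + 2 * γ₁₂ * ρ₁ * ρ₂)
    (h₁₃ : a ^ 2 + b ^ 2 = ρ₁ ^ 2 + ρ₃ ^ 2 + 2 * γ₁₃ * ρ₁ * ρ₃)
    (h₂₃ : (a - d) ^ 2 + b ^ 2 = ρ₂ ^ 2 + ρ₃ ^ 2 + 2 * γ₂₃ * ρ₂ * ρ₃)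
    (hc₁ : (p - a) ^ 2 + (q - b) ^ 2 ≤ ρ₃ ^ 2) (hc₂ : (p - a) ^ 2 + (-q - b) ^ 2 ≤ ρ₃ ^ 2) :
    1 ≤ γ₁₂ ^ 2 + γ₁₃ ^ 2 + γ₂₃ ^ 2 + 2 * γ₁₂ * γ₁₃ * γ₂₃ := by
  have hpq₂ : ρ₂ ^ 2 = (d - p) ^ 2 + q ^ 2 := by linear_combination hpq + hp
  have hX : 2 * ρ₁ * ρ₃ * γ₁₃ = a ^ 2 + b ^ 2 - ρ₁ ^ 2 - ρ₃ ^ 2 := by linear_combination -h₁₃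
  have hY : 2 * ρ₁ * ρ₂ * γ₁₂ = d ^ 2 - ρ₁ ^ 2 - ρ₂ ^ 2 := by linear_combination -h₁₂
  have hZ : 2 * ρ₂ * ρ₃ * γ₂₃ = (a - d) ^ 2 + b ^ 2 - ρ₂ ^ 2 - ρ₃ ^ 2 := by linear_combination -h₂₃
  -- the right side is `d²` times the product of the powers of the corners with respect to `D₃`
  have key : 4 * ρ₁ ^ 2 * ρ₂ ^ 2 * ρ₃ ^ 2 *
        (γ₁₂ ^ 2 + γ₁₃ ^ 2 + γ₂₃ ^ 2 + 2 * γ₁₂ * γ₁₃ * γ₂₃ - 1) =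
      d ^ 2 * (((p - a) ^ 2 + (q - b) ^ 2 - ρ₃ ^ 2) * ((p - a) ^ 2 + (-q - b) ^ 2 - ρ₃ ^ 2)) := by
    calc _ = ρ₃ ^ 2 * (2 * ρ₁ * ρ₂ * γ₁₂) ^ 2 + ρ₂ ^ 2 * (2 * ρ₁ * ρ₃ * γ₁₃) ^ 2
          + ρ₁ ^ 2 * (2 * ρ₂ * ρ₃ * γ₂₃) ^ 2
          + (2 * ρ₁ * ρ₂ * γ₁₂) * (2 * ρ₁ * ρ₃ * γ₁₃) * (2 * ρ₂ * ρ₃ * γ₂₃)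
          - 4 * ρ₁ ^ 2 * ρ₂ ^ 2 * ρ₃ ^ 2 := by ring
      _ = _ := by rw [hX, hY, hZ, hpq, hpq₂]; ring
  have hprod : 0 ≤ 4 * ρ₁ ^ 2 * ρ₂ ^ 2 * ρ₃ ^ 2 *
      (γ₁₂ ^ 2 + γ₁₃ ^ 2 + γ₂₃ ^ 2 + 2 * γ₁₂ * γ₁₃ * γ₂₃ - 1) := by
    rw [key]
    exact mul_nonneg (sq_nonneg d) (mul_nonneg_of_nonpos_of_nonpos (by linarith) (by linarith))
  linarith [nonneg_of_mul_nonneg_right hprod (by positivity)]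

namespace Complex

lemma mem_closedBall_iff_sq {z c : ℂ} {r : ℝ} (hr : 0 ≤ r) :
    z ∈ closedBall c r ↔ (z.re - c.re) ^ 2 + (z.im - c.im) ^ 2 ≤ r ^ 2 := by
  rw [mem_closedBall, dist_eq_re_im, Real.sqrt_le_left hr]

lemma exists_corners_of_inter_subset {d ρ₁ ρ₂ ρ₃ γ : ℝ} {ζ : ℂ} (hd : 0 < d) (hρ₁ : 0 < ρ₁)
    (hρ₂ : 0 < ρ₂) (hρ₃ : 0 ≤ ρ₃) (hγ : γ ∈ Set.Icc (-1) 1)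
    (h₁₂ : d ^ 2 = ρ₁ ^ 2 + ρ₂ ^ 2 + 2 * γ * ρ₁ * ρ₂)
    (hsub : closedBall 0 ρ₁ ∩ closedBall (d : ℂ) ρ₂ ⊆ closedBall ζ ρ₃) :
    ∃ p q : ℝ, 2 * d * p = d ^ 2 + ρ₁ ^ 2 - ρ₂ ^ 2 ∧ 0 ≤ q ∧ ρ₁ ^ 2 = p ^ 2 + q ^ 2 ∧
      (p - ζ.re) ^ 2 + (q - ζ.im) ^ 2 ≤ ρ₃ ^ 2 ∧ (p - ζ.re) ^ 2 + (-q - ζ.im) ^ 2 ≤ ρ₃ ^ 2 := by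
  obtain ⟨p, hp⟩ : ∃ p, 2 * d * p = d ^ 2 + ρ₁ ^ 2 - ρ₂ ^ 2 :=
    ⟨_, mul_div_cancel₀ _ (by positivity)⟩
  have hpρ : p ^ 2 ≤ ρ₁ ^ 2 := by
    have : 4 * d ^ 2 * (ρ₁ ^ 2 - p ^ 2) = 4 * ρ₁ ^ 2 * ρ₂ ^ 2 * (1 - γ ^ 2) := by
      linear_combination (-(2 * d * p) - (d ^ 2 + ρ₁ ^ 2 - ρ₂ ^ 2)) * hp
        - (d ^ 2 - ρ₁ ^ 2 - ρ₂ ^ 2 + 2 * γ * ρ₁ * ρ₂) * h₁₂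
    have hγ2 : 0 ≤ 1 - γ ^ 2 := by nlinarith [hγ.1, hγ.2]
    exact sub_nonneg.1 (nonneg_of_mul_nonneg_right (by rw [this]; positivity) (by positivity))
  set q := √(ρ₁ ^ 2 - p ^ 2)
  have hq : ρ₁ ^ 2 = p ^ 2 + q ^ 2 := by rw [Real.sq_sqrt (sub_nonneg.2 hpρ)]; ring
  have hcorner : ∀ t, t ^ 2 = q ^ 2 → (p - ζ.re) ^ 2 + (t - ζ.im) ^ 2 ≤ ρ₃ ^ 2 := fun t ht =>
    (mem_closedBall_iff_sq hρ₃).1 <| @hsub ⟨p, t⟩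
      ⟨(mem_closedBall_iff_sq hρ₁.le).2 (by simp only [zero_re, zero_im, sub_zero]; linarith),
        (mem_closedBall_iff_sq hρ₂.le).2 (by simp only [ofReal_re, ofReal_im]; nlinarith)⟩
  exact ⟨p, q, hp, Real.sqrt_nonneg _, hq, hcorner q rfl, hcorner (-q) (neg_sq q)⟩

lemma norm_mul_add_mul_re_pos_of_inter_subset {d ρ₁ ρ₂ ρ₃ p : ℝ} {ζ : ℂ} (hd : 0 < d)
    (hρ₁ : 0 < ρ₁) (hρ₂ : 0 ≤ ρ₂) (hρ₃ : 0 ≤ ρ₃) (hζ : |ρ₃ - ρ₁| < ‖ζ‖)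
    (hp : 2 * d * p = d ^ 2 + ρ₁ ^ 2 - ρ₂ ^ 2)
    (hsub : closedBall 0 ρ₁ ∩ closedBall (d : ℂ) ρ₂ ⊆ closedBall ζ ρ₃) :
    0 < ‖ζ‖ * p + ρ₁ * ζ.re := by
  obtain ⟨a, b⟩ := ζ
  set e := ‖(⟨a, b⟩ : ℂ)‖
  have he : e ^ 2 = a ^ 2 + b ^ 2 := by rw [Complex.sq_norm, normSq_apply]; ring
  have he0 : 0 < e := (abs_nonneg _).trans_lt hζ
  obtain ⟨s, hs⟩ : ∃ s, s * e = ρ₁ := ⟨_, div_mul_cancel₀ _ he0.ne'⟩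
  -- `-s (a + b i)` is the point of `D₁` farthest from the centre of `D₃`
  have hmem : (⟨-s * a, -s * b⟩ : ℂ) ∈ closedBall 0 ρ₁ := by
    rw [mem_closedBall_iff_sq hρ₁.le, ← hs]
    simp only [zero_re, zero_im, sub_zero]
    exact le_of_eq (by linear_combination (-s ^ 2) * he)
  have hout : (⟨-s * a, -s * b⟩ : ℂ) ∉ closedBall ⟨a, b⟩ ρ₃ := by
    rw [mem_closedBall_iff_sq hρ₃, not_le]
    have : ρ₃ ^ 2 < (e + ρ₁) ^ 2 :=
      pow_lt_pow_left₀ (by linarith [le_abs_self (ρ₃ - ρ₁)]) hρ₃ two_ne_zero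
    refine this.trans_eq ?_
    rw [← hs]
    linear_combination (1 + s) ^ 2 * he
  have hfar : ρ₂ ^ 2 < ρ₁ ^ 2 + 2 * s * a * d + d ^ 2 := by
    have := not_le.1 fun h => hout (hsub ⟨hmem, (mem_closedBall_iff_sq hρ₂).2 h⟩)
    simp only [ofReal_re, ofReal_im] at this
    have hρ : ρ₁ ^ 2 = s ^ 2 * (a ^ 2 + b ^ 2) := by rw [← hs, mul_pow, he]
    linear_combination this - hρ
  have hps : 0 < p + s * a :=
    pos_of_mul_pos_right (by linarith : 0 < 2 * d * (p + s * a)) (by positivity)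
  calc 0 < e * (p + s * a) := mul_pos he0 hps
    _ = e * p + ρ₁ * a := by rw [← hs]; ring

theorem exterior_cos_ineq_of_inter_subset_normalized {d ρ₁ ρ₂ ρ₃ γ₁₂ γ₁₃ γ₂₃ : ℝ} {ζ : ℂ}
    (hd : 0 < d) (hρ₁ : 0 < ρ₁) (hρ₂ : 0 < ρ₂) (hρ₃ : 0 < ρ₃)
    (hγ₁₂ : γ₁₂ ∈ Set.Icc (-1) 1) (hγ₁₃ : -1 < γ₁₃)
    (h₁₂ : d ^ 2 = ρ₁ ^ 2 + ρ₂ ^ 2 + 2 * γ₁₂ * ρ₁ * ρ₂)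
    (h₁₃ : ‖ζ‖ ^ 2 = ρ₁ ^ 2 + ρ₃ ^ 2 + 2 * γ₁₃ * ρ₁ * ρ₃)
    (h₂₃ : ‖ζ - d‖ ^ 2 = ρ₂ ^ 2 + ρ₃ ^ 2 + 2 * γ₂₃ * ρ₂ * ρ₃)
    (hsub : closedBall 0 ρ₁ ∩ closedBall (d : ℂ) ρ₂ ⊆ closedBall ζ ρ₃) :
    γ₂₃ + γ₁₃ * γ₁₂ ≤ 0 ∧ 1 ≤ γ₁₂ ^ 2 + γ₁₃ ^ 2 + γ₂₃ ^ 2 + 2 * γ₁₂ * γ₁₃ * γ₂₃ := by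
  have hζ : |ρ₃ - ρ₁| < ‖ζ‖ :=
    abs_lt_of_sq_lt_sq (by nlinarith [mul_pos hρ₁ hρ₃]) (norm_nonneg ζ)
  obtain ⟨p, q, hp, hq, hpq, hc₁, hc₂⟩ :=
    exists_corners_of_inter_subset hd hρ₁ hρ₂ hρ₃.le hγ₁₂ h₁₂ hsub
  have hanti := norm_mul_add_mul_re_pos_of_inter_subset hd hρ₁ hρ₂.le hρ₃.le hζ hp hsub
  have he : ‖ζ‖ ^ 2 = ζ.re ^ 2 + ζ.im ^ 2 := by rw [Complex.sq_norm, normSq_apply]; ring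
  have hf : ‖ζ - d‖ ^ 2 = (ζ.re - d) ^ 2 + ζ.im ^ 2 := by
    rw [Complex.sq_norm, normSq_apply, sub_re, sub_im, ofReal_re, ofReal_im]; ring
  exact ⟨add_mul_nonpos_of_corners hd hρ₁ hρ₂ hρ₃ hq hp hpq he h₁₂ h₁₃ (hf ▸ h₂₃) hc₁ hc₂ hζ
      hanti,
    one_le_sq_add_sq_add_sq_add_two_mul_of_corners hρ₁ hρ₂ hρ₃ hp hpq h₁₂ (he ▸ h₁₃) (hf ▸ h₂₃)
      hc₁ hc₂⟩

lemma exists_isometryEquiv_zero_ofReal (c₁ c₂ : ℂ) :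
    ∃ g : ℂ ≃ᵢ ℂ, g 0 = c₁ ∧ g (dist c₁ c₂ : ℂ) = c₂ := by
  obtain ⟨u, hu⟩ : ∃ u : Circle, (u : ℂ) * dist c₁ c₂ = c₂ - c₁ := by
    rcases eq_or_ne c₁ c₂ with rfl | h
    · exact ⟨1, by simp⟩
    have hd : (dist c₁ c₂ : ℂ) ≠ 0 := by simpa using h
    refine ⟨⟨(c₂ - c₁) / dist c₁ c₂, ?_⟩, div_mul_cancel₀ _ hd⟩
    rw [Submonoid.unitSphere, Submonoid.mem_mk, Subsemigroup.mem_mk, mem_sphere_zero_iff_norm,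
      norm_div, norm_real, Real.norm_eq_abs, abs_dist, dist_comm, Complex.dist_eq,
      div_self (by simpa [sub_eq_zero] using h.symm)]
  exact ⟨(rotation u).toIsometryEquiv.trans (IsometryEquiv.addLeft c₁), by simp,
    by simp [rotation_apply, hu]⟩

theorem exterior_cos_ineq_of_inter_subset {c₁ c₂ c₃ : ℂ} {ρ₁ ρ₂ ρ₃ γ₁₂ γ₁₃ γ₂₃ : ℝ}
    (hρ₁ : 0 < ρ₁) (hρ₂ : 0 < ρ₂) (hρ₃ : 0 < ρ₃)
    (hγ₁₂ : γ₁₂ ∈ Set.Ioc (-1) 1) (hγ₁₃ : -1 < γ₁₃)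
    (h₁₂ : dist c₁ c₂ ^ 2 = ρ₁ ^ 2 + ρ₂ ^ 2 + 2 * γ₁₂ * ρ₁ * ρ₂)
    (h₁₃ : dist c₁ c₃ ^ 2 = ρ₁ ^ 2 + ρ₃ ^ 2 + 2 * γ₁₃ * ρ₁ * ρ₃)
    (h₂₃ : dist c₂ c₃ ^ 2 = ρ₂ ^ 2 + ρ₃ ^ 2 + 2 * γ₂₃ * ρ₂ * ρ₃)
    (hsub : closedBall c₁ ρ₁ ∩ closedBall c₂ ρ₂ ⊆ closedBall c₃ ρ₃) :
    γ₂₃ + γ₁₃ * γ₁₂ ≤ 0 ∧ 1 ≤ γ₁₂ ^ 2 + γ₁₃ ^ 2 + γ₂₃ ^ 2 + 2 * γ₁₂ * γ₁₃ * γ₂₃ := by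
  obtain ⟨g, hg₀, hgd⟩ := exists_isometryEquiv_zero_ofReal c₁ c₂
  have hd : 0 < dist c₁ c₂ := by
    have : 0 < dist c₁ c₂ ^ 2 := by nlinarith [mul_pos hρ₁ hρ₂, hγ₁₂.1, sq_nonneg (ρ₁ - ρ₂)]
    exact dist_nonneg.lt_of_ne fun h => by simp [← h] at this
  have hsub' := Set.preimage_mono (f := g) hsub
  rw [Set.preimage_inter, g.preimage_closedBall, g.preimage_closedBall, g.preimage_closedBall,
    ← hg₀, ← hgd, g.symm_apply_apply, g.symm_apply_apply] at hsub'
  refine exterior_cos_ineq_of_inter_subset_normalized hd hρ₁ hρ₂ hρ₃ ⟨hγ₁₂.1.le, hγ₁₂.2⟩ hγ₁₃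
    h₁₂ ?_ ?_ hsub'
  · rwa [← dist_zero_right, ← g.dist_eq, g.apply_symm_apply, hg₀, dist_comm]
  · rwa [← dist_eq_norm, ← g.dist_eq, g.apply_symm_apply, hgd, dist_comm]

end Complex

theorem UpperHalfPlane.dist_coe_center_center_sq (z w : UpperHalfPlane) (r s : ℝ) :
    dist (z.center r : ℂ) (w.center s) ^ 2 =
      2 * z.im * w.im * (cosh (dist z w) - cosh r * cosh s) + (z.im * sinh r) ^ 2
        + (w.im * sinh s) ^ 2 := by
  have H : 2 * z.im * w.im ≠ 0 := by have := z.im_pos; have := w.im_pos; positivity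
  rw [Complex.dist_eq_re_im, sq_sqrt (by positivity), cosh_dist', mul_sub, mul_div_cancel₀ _ H]
  simp only [UpperHalfPlane.coe_re, UpperHalfPlane.coe_im, UpperHalfPlane.center_re,
    UpperHalfPlane.center_im]
  linear_combination z.im ^ 2 * cosh_sq r + w.im ^ 2 * cosh_sq s

theorem UpperHalfPlane.exterior_cos_ineq_of_inter_subset {p₁ p₂ p₃ : UpperHalfPlane}
    {r₁ r₂ r₃ γ₁₂ γ₁₃ γ₂₃ : ℝ} (hr₁ : 0 < r₁) (hr₂ : 0 < r₂) (hr₃ : 0 < r₃)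
    (hγ₁₂ : γ₁₂ ∈ Set.Ioc (-1) 1) (hγ₁₃ : -1 < γ₁₃)
    (h₁₂ : cosh (dist p₁ p₂) = cosh r₁ * cosh r₂ + γ₁₂ * sinh r₁ * sinh r₂)
    (h₁₃ : cosh (dist p₁ p₃) = cosh r₁ * cosh r₃ + γ₁₃ * sinh r₁ * sinh r₃)
    (h₂₃ : cosh (dist p₂ p₃) = cosh r₂ * cosh r₃ + γ₂₃ * sinh r₂ * sinh r₃)
    (hsub : closedBall p₁ r₁ ∩ closedBall p₂ r₂ ⊆ closedBall p₃ r₃) :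
    γ₂₃ + γ₁₃ * γ₁₂ ≤ 0 ∧ 1 ≤ γ₁₂ ^ 2 + γ₁₃ ^ 2 + γ₂₃ ^ 2 + 2 * γ₁₂ * γ₁₃ * γ₂₃ := by
  have hρ (p : UpperHalfPlane) {r : ℝ} (hr : 0 < r) : 0 < p.im * sinh r :=
    mul_pos p.im_pos (sinh_pos_iff.2 hr)
  have hcenter {p q : UpperHalfPlane} {r s γ : ℝ}
      (h : cosh (dist p q) = cosh r * cosh s + γ * sinh r * sinh s) :
      dist (p.center r : ℂ) (q.center s) ^ 2 =
        (p.im * sinh r) ^ 2 + (q.im * sinh s) ^ 2 + 2 * γ * (p.im * sinh r) * (q.im * sinh s) := by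
    rw [UpperHalfPlane.dist_coe_center_center_sq, h]
    ring
  refine Complex.exterior_cos_ineq_of_inter_subset (hρ p₁ hr₁) (hρ p₂ hr₂) (hρ p₃ hr₃) hγ₁₂ hγ₁₃
    (hcenter h₁₂) (hcenter h₁₃) (hcenter h₂₃) ?_
  simp only [← UpperHalfPlane.image_coe_closedBall, ← Set.image_inter UpperHalfPlane.coe_injective]
  exact Set.image_mono hsub

theorem exterior_angle_ineq_of_subset_general
    (pi pj pk : UpperHalfPlane) (ri rj rk : ℝ)
    (hri : 0 < ri) (hrj : 0 < rj) (hrk : 0 < rk)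
    (Θi Θj Θk : ℝ)
    (hΘi : Θi ∈ Set.Ico 0 π) (hΘj : Θj ∈ Set.Ico 0 π) (hΘk : Θk ∈ Set.Ico 0 π)
    (hdi : Real.cosh (dist pj pk) = Real.cosh rj * Real.cosh rk + Real.cos Θi * Real.sinh rj * Real.sinh rk)
    (hdj : Real.cosh (dist pk pi) = Real.cosh rk * Real.cosh ri + Real.cos Θj * Real.sinh rk * Real.sinh ri)
    (hdk : Real.cosh (dist pi pj) = Real.cosh ri * Real.cosh rj + Real.cos Θk * Real.sinh ri * Real.sinh rj)
    (hsub : closedBall pi ri ∩ closedBall pj rj ⊆ closedBall pk rk) :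
    Θi + Θj ≥ Θk + π := by
  have hcos {Θ : ℝ} (h : Θ ∈ Set.Ico 0 π) : cos Θ ∈ Set.Ioc (-1) 1 :=
    ⟨cos_pi ▸ cos_lt_cos_of_nonneg_of_le_pi h.1 le_rfl h.2, cos_le_one Θ⟩
  have hswap {p q : UpperHalfPlane} {r s γ : ℝ}
      (h : cosh (dist p q) = cosh r * cosh s + γ * sinh r * sinh s) :
      cosh (dist q p) = cosh s * cosh r + γ * sinh s * sinh r := by
    rw [dist_comm, h]; ring
  obtain ⟨hi, hgram⟩ := UpperHalfPlane.exterior_cos_ineq_of_inter_subset hri hrj hrk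
    (hcos hΘk) (hcos hΘj).1 hdk (hswap hdj) hdi hsub
  obtain ⟨hj, -⟩ := UpperHalfPlane.exterior_cos_ineq_of_inter_subset hrj hri hrk
    (hcos hΘk) (hcos hΘi).1 (hswap hdk) hdi (hswap hdj) (Set.inter_comm _ _ ▸ hsub)
  have hIcc {Θ : ℝ} (h : Θ ∈ Set.Ico 0 π) : Θ ∈ Set.Icc 0 π := Set.Ico_subset_Icc_self h
  have hi' := pi_le_add_abs_sub_of_cos_add_cos_mul_cos_nonpos (hIcc hΘi) (hIcc hΘj) (hIcc hΘk)
    hi (by linarith)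
  have hj' := pi_le_add_abs_sub_of_cos_add_cos_mul_cos_nonpos (hIcc hΘj) (hIcc hΘi) (hIcc hΘk)
    hj (by linarith)
  rcases abs_cases (Θj - Θk) with ⟨h₁, -⟩ | ⟨h₁, -⟩ <;>
    rcases abs_cases (Θi - Θk) with ⟨h₂, -⟩ | ⟨h₂, -⟩ <;> linarith [hΘk.2]

/-- Lemma 2.7: if, in the hyperbolic plane (upper half-plane model), three mutually
intersecting closed disks have pairwise exterior intersection angles
`Θi` (between `D_j` and `D_k`), `Θj` (between `D_k` and `D_i`), `Θk` (between `D_i` and `D_j`),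
encoded via the hyperbolic cosine law for intersecting circles, and `D_i ∩ D_j ⊆ D_k`,
then `Θi + Θj ≥ Θk + π`. -/
theorem exterior_angle_ineq_of_subset
    (pi pj pk : UpperHalfPlane) (ri rj rk : ℝ)
    (hri : 0 < ri) (hrj : 0 < rj) (hrk : 0 < rk)
    (Θi Θj Θk : ℝ)
    (hΘi : Θi ∈ Set.Ico 0 π) (hΘj : Θj ∈ Set.Ico 0 π) (hΘk : Θk ∈ Set.Ico 0 π)
    (hdi : Real.cosh (dist pj pk) = Real.cosh rj * Real.cosh rk + Real.cos Θi * Real.sinh rj * Real.sinh rk)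
    (hdj : Real.cosh (dist pk pi) = Real.cosh rk * Real.cosh ri + Real.cos Θj * Real.sinh rk * Real.sinh ri)
    (hdk : Real.cosh (dist pi pj) = Real.cosh ri * Real.cosh rj + Real.cos Θk * Real.sinh ri * Real.sinh rj)
    (hij : (closedBall pi ri ∩ closedBall pj rj).Nonempty)
    (hjk : (closedBall pj rj ∩ closedBall pk rk).Nonempty)
    (hki : (closedBall pk rk ∩ closedBall pi ri).Nonempty)
    (hsub : closedBall pi ri ∩ closedBall pj rj ⊆ closedBall pk rk) :
    Θi + Θj ≥ Θk + π :=
  exterior_angle_ineq_of_subset_general pi pj pk ri rj rk hri hrj hrk Θi Θj Θk hΘi hΘj hΘk hdi hdj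
    hdk hsub
end

section
/- Let Θ_i, Θ_j, Θ_k ∈ [0, π) satisfy cos Θ_i + cos Θ_j cos Θ_k ≥ 0 cyclically. Then for every t ∈ [0, 1], cos(tΘ_i) + cos(tΘ_j) cos(tΘ_k) ≥ 0 cyclically. -/
open Real

private lemma sum_le_pi_of_cos_add_nonneg (B C : ℝ)
    (hB : B ∈ Set.Ico 0 π) (hC : C ∈ Set.Ico 0 π)
    (h : 0 ≤ Real.cos B + Real.cos C) : B + C ≤ π := by
  by_contra h'
  push_neg at h'
  have hmem1 : π - C ∈ Set.Icc 0 π := ⟨by linarith [hC.2], by linarith [hC.1]⟩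
  have hmem2 : B ∈ Set.Icc 0 π := ⟨hB.1, hB.2.le⟩
  have := Real.strictAntiOn_cos hmem1 hmem2 (by linarith)
  rw [Real.cos_pi_sub] at this
  linarith

private lemma gamma_nonneg_aux (A B C : ℝ)
    (hA0 : 0 ≤ A) (hApi : A ≤ π)
    (hB0 : 0 ≤ B) (hC0 : 0 ≤ C) (hBpi : B ≤ π) (hCpi : C ≤ π)
    (hBC : B + C ≤ π)
    (h1 : 0 ≤ Real.cos A + Real.cos B * Real.cos C) :
    ∀ t ∈ Set.Icc (0:ℝ) 1, 0 ≤ Real.cos (t*A) + Real.cos (t*B) * Real.cos (t*C) := by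
  set f : ℝ → ℝ := fun t => Real.cos (t*A) + Real.cos (t*B) * Real.cos (t*C) with hf
  have hderiv : ∀ t : ℝ, HasDerivAt f
      (-Real.sin (t*A) * A + ((-Real.sin (t*B) * B) * Real.cos (t*C)
        + Real.cos (t*B) * (-Real.sin (t*C) * C))) t := by
    intro t
    have dA : HasDerivAt (fun u : ℝ => Real.cos (u*A)) (-Real.sin (t*A) * A) t :=
      by have h := (Real.hasDerivAt_cos (t*A)).comp t ((by simpa using (hasDerivAt_id t).mul_const A : HasDerivAt (fun u : ℝ => u*A) A t)); exact h
    have dB : HasDerivAt (fun u : ℝ => Real.cos (u*B)) (-Real.sin (t*B) * B) t :=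
      by have h := (Real.hasDerivAt_cos (t*B)).comp t ((by simpa using (hasDerivAt_id t).mul_const B : HasDerivAt (fun u : ℝ => u*B) B t)); exact h
    have dC : HasDerivAt (fun u : ℝ => Real.cos (u*C)) (-Real.sin (t*C) * C) t :=
      by have h := (Real.hasDerivAt_cos (t*C)).comp t ((by simpa using (hasDerivAt_id t).mul_const C : HasDerivAt (fun u : ℝ => u*C) C t)); exact h
    exact dA.add (dB.mul dC)
  have hanti : AntitoneOn f (Set.Icc (0:ℝ) 1) := by
    apply antitoneOn_of_deriv_nonpos (convex_Icc 0 1)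
    · exact fun t _ => ((hderiv t).continuousAt).continuousWithinAt
    · exact fun t _ => ((hderiv t).differentiableAt).differentiableWithinAt
    · intro t ht
      rw [interior_Icc] at ht
      rw [(hderiv t).deriv]
      have ht0 : 0 ≤ t := ht.1.le
      have ht1 : t ≤ 1 := ht.2.le
      have hsA : 0 ≤ Real.sin (t*A) := Real.sin_nonneg_of_nonneg_of_le_pi
        (by positivity) (by nlinarith)
      -- key: B*sin(tB)*cos(tC) + C*cos(tB)*sin(tC) ≥ 0
      have hsum : 0 ≤ Real.sin (t*(B+C)) := Real.sin_nonneg_of_nonneg_of_le_pi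
        (by positivity) (by nlinarith)
      have hdiff : 0 ≤ (B - C) * Real.sin (t*(B-C)) := by
        rcases le_total C B with hcb | hbc
        · have : 0 ≤ Real.sin (t*(B-C)) := Real.sin_nonneg_of_nonneg_of_le_pi
            (by nlinarith) (by nlinarith)
          nlinarith
        · have h1 : t*(B-C) ≤ 0 := by nlinarith
          have h2 : -π ≤ t*(B-C) := by nlinarith
          have : Real.sin (t*(B-C)) ≤ 0 := Real.sin_nonpos_of_nonpos_of_neg_pi_le h1 h2
          nlinarith
      have hid : 2 * (B * Real.sin (t*B) * Real.cos (t*C)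
          + C * Real.cos (t*B) * Real.sin (t*C))
          = (B+C) * Real.sin (t*(B+C)) + (B-C) * Real.sin (t*(B-C)) := by
        rw [mul_sub t B C, mul_add t B C, Real.sin_add, Real.sin_sub]
        ring
      nlinarith [mul_nonneg (by linarith : (0:ℝ) ≤ B + C) hsum]
  intro t ht
  have := hanti ht (Set.mem_Icc.mpr ⟨zero_le_one, le_rfl⟩) ht.2
  have hf1 : f 1 = Real.cos A + Real.cos B * Real.cos C := by simp [hf]
  calc (0:ℝ) ≤ f 1 := by rw [hf1]; exact h1
    _ ≤ f t := this

theorem gram_cofactors_nonneg_of_scaled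
    (Θi Θj Θk : ℝ)
    (hi : Θi ∈ Set.Ico 0 π) (hj : Θj ∈ Set.Ico 0 π) (hk : Θk ∈ Set.Ico 0 π)
    (hγi : 0 ≤ Real.cos Θi + Real.cos Θj * Real.cos Θk)
    (hγj : 0 ≤ Real.cos Θj + Real.cos Θk * Real.cos Θi)
    (hγk : 0 ≤ Real.cos Θk + Real.cos Θi * Real.cos Θj) :
    ∀ t ∈ Set.Icc (0 : ℝ) 1,
      0 ≤ Real.cos (t * Θi) + Real.cos (t * Θj) * Real.cos (t * Θk) ∧
      0 ≤ Real.cos (t * Θj) + Real.cos (t * Θk) * Real.cos (t * Θi) ∧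
      0 ≤ Real.cos (t * Θk) + Real.cos (t * Θi) * Real.cos (t * Θj) := by
  have Ii : Θi ∈ Set.Icc 0 π := ⟨hi.1, hi.2.le⟩
  have Ij : Θj ∈ Set.Icc 0 π := ⟨hj.1, hj.2.le⟩
  have Ik : Θk ∈ Set.Icc 0 π := ⟨hk.1, hk.2.le⟩
  have hci : Real.cos π < Real.cos Θi := Real.strictAntiOn_cos Ii (by simp [Real.pi_pos.le]) hi.2
  have hcj : Real.cos π < Real.cos Θj := Real.strictAntiOn_cos Ij (by simp [Real.pi_pos.le]) hj.2
  have hck : Real.cos π < Real.cos Θk := Real.strictAntiOn_cos Ik (by simp [Real.pi_pos.le]) hk.2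
  rw [Real.cos_pi] at hci hcj hck
  have hjk : Θj + Θk ≤ π := by
    apply sum_le_pi_of_cos_add_nonneg _ _ hj hk
    nlinarith
  have hki : Θk + Θi ≤ π := by
    apply sum_le_pi_of_cos_add_nonneg _ _ hk hi
    nlinarith
  have hij : Θi + Θj ≤ π := by
    apply sum_le_pi_of_cos_add_nonneg _ _ hi hj
    nlinarith
  intro t ht
  refine ⟨?_, ?_, ?_⟩
  · exact gamma_nonneg_aux Θi Θj Θk hi.1 hi.2.le hj.1 hk.1 hj.2.le hk.2.le hjk hγi t ht
  · exact gamma_nonneg_aux Θj Θk Θi hj.1 hj.2.le hk.1 hi.1 hk.2.le hi.2.le hki hγj t ht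
  · exact gamma_nonneg_aux Θk Θi Θj hk.1 hk.2.le hi.1 hj.1 hi.2.le hj.2.le hij hγk t ht
end

section
/- If Θ_i, Θ_j, Θ_k ∈ [0, π) satisfy cos Θ_i + cos Θ_j cos Θ_k ≥ 0 cyclically and Θ_j + Θ_k ≤ π, then the function t ↦ cos(tΘ_i) + cos(tΘ_j)cos(tΘ_k) is non-increasing on [0, 1]. -/
/-! By product-to-sum, `cos (tΘj) cos (tΘk) = (cos (t(Θj - Θk)) + cos (t(Θj + Θk))) / 2`, so the
function is a positive combination of three functions `t ↦ cos (t c)` with `|c| ≤ π`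
(for `c = Θj ± Θk` this is where `Θj + Θk ≤ π` enters). Each of these is non-increasing on
`[0, 1]`, since `t |c|` stays in `[0, π]`, where `cos` decreases. -/

open Real

theorem antitoneOn_cos_mul {c : ℝ} (hc : |c| ≤ π) :
    AntitoneOn (fun t : ℝ => cos (t * c)) (Set.Icc 0 1) := by
  have hmaps : Set.MapsTo (fun t : ℝ => t * |c|) (Set.Icc 0 1) (Set.Icc 0 π) :=
    fun t ht => ⟨by have := ht.1; positivity, by nlinarith [ht.1, ht.2, abs_nonneg c]⟩
  have hmono : MonotoneOn (fun t : ℝ => t * |c|) (Set.Icc 0 1) :=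
    fun _ _ _ _ hab => mul_le_mul_of_nonneg_right hab (abs_nonneg c)
  intro a ha b hb hab
  simp only [← cos_abs (_ * c), abs_mul, abs_of_nonneg ha.1, abs_of_nonneg hb.1]
  exact antitoneOn_cos (hmaps ha) (hmaps hb) (hmono ha hb hab)

theorem gamma_antitoneOn_general
    (Θi Θj Θk : ℝ)
    (hi : Θi ∈ Set.Ico 0 π) (hj : Θj ∈ Set.Ico 0 π) (hk : Θk ∈ Set.Ico 0 π)
    (hjk : Θj + Θk ≤ π) :
    AntitoneOn (fun t : ℝ => Real.cos (t * Θi) + Real.cos (t * Θj) * Real.cos (t * Θk))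
      (Set.Icc 0 1) := by
  have hcos_i := antitoneOn_cos_mul (c := Θi) (by rw [abs_of_nonneg hi.1]; exact hi.2.le)
  have hcos_diff := antitoneOn_cos_mul (c := Θj - Θk)
    (abs_sub_le_iff.2 ⟨by linarith [hk.1], by linarith [hj.1]⟩)
  have hcos_sum := antitoneOn_cos_mul (c := Θj + Θk)
    (by rwa [abs_of_nonneg (add_nonneg hj.1 hk.1)])
  have product_to_sum (t : ℝ) :
      2 * cos (t * Θj) * cos (t * Θk) = cos (t * (Θj - Θk)) + cos (t * (Θj + Θk)) := by
    rw [two_mul_cos_mul_cos, mul_sub, mul_add]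
  intro a ha b hb hab
  dsimp only at hcos_i hcos_diff hcos_sum ⊢
  linarith [hcos_i ha hb hab, hcos_diff ha hb hab, hcos_sum ha hb hab,
    product_to_sum a, product_to_sum b]

theorem gamma_antitoneOn
    (Θi Θj Θk : ℝ)
    (hi : Θi ∈ Set.Ico 0 π) (hj : Θj ∈ Set.Ico 0 π) (hk : Θk ∈ Set.Ico 0 π)
    (hγi : 0 ≤ Real.cos Θi + Real.cos Θj * Real.cos Θk)
    (hγj : 0 ≤ Real.cos Θj + Real.cos Θk * Real.cos Θi)
    (hγk : 0 ≤ Real.cos Θk + Real.cos Θi * Real.cos Θj)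
    (hjk : Θj + Θk ≤ π) :
    AntitoneOn (fun t : ℝ => Real.cos (t * Θi) + Real.cos (t * Θj) * Real.cos (t * Θk))
      (Set.Icc 0 1) :=
  gamma_antitoneOn_general Θi Θj Θk hi hj hk hjk
end

section
/- Let I_i, I_j, I_k ∈ (−1, 1] with γ_{ijk} = I_i + I_jI_k ≥ 0 cyclically, and let a_η ≥ 1, x_η > 0 be arbitrary reals (with a_η² − x_η² = 1). Then the determinant of the matrix M = [[0, a_k x_j + I_i a_j x_k, a_j x_k + I_i a_k x_j], [a_k x_i + I_j a_i x_k, 0, a_i x_k + I_j a_k x_i], [a_j x_i + I_k a_i x_j, a_i x_j + I_k a_j x_i, 0]] is strictly positive. -/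
open Real Matrix

/-
Expanding along the zero diagonal, det M is the sum of the two cyclic products of the
off-diagonal entries. Regrouped by powers of the I's, this is
γ_i Z_i + γ_j Z_j + γ_k Z_k + 2 (1 + I_i I_j I_k) a_i a_j a_k x_i x_j x_k with
γ_i = I_i + I_j I_k and Z_i = a_i x_i (a_k² x_j² + a_j² x_k²) > 0. The first three terms are
nonnegative by hypothesis and the last is positive, since a product of three numbers in
(-1, 1] never equals -1.
-/

theorem Matrix.det_fin_three_of_diag_eq_zero {R : Type*} [CommRing R] (b c d f g h : R) :
    det !![0, b, c; d, 0, f; g, h, 0] = b * f * g + c * d * h := by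
  simp [det_fin_three]

theorem one_add_mul_mul_pos {R : Type*} [CommRing R] [LinearOrder R] [IsStrictOrderedRing R]
    {a b c : R} (ha : a ∈ Set.Ioc (-1) 1) (hb : b ∈ Set.Ioc (-1) 1) (hc : c ∈ Set.Ioc (-1) 1) :
    0 < 1 + a * b * c := by
  obtain ⟨ha₁, ha₂⟩ := ha
  obtain ⟨hb₁, hb₂⟩ := hb
  obtain ⟨hc₁, hc₂⟩ := hc
  nlinarith [mul_pos (neg_lt_iff_pos_add'.mp ha₁) (neg_lt_iff_pos_add'.mp hb₁),
    mul_nonneg (sub_nonneg.mpr ha₂) (sub_nonneg.mpr hb₂),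
    mul_nonneg (sub_nonneg.mpr hc₂) (sub_nonneg.mpr ha₂),
    mul_nonneg (sub_nonneg.mpr hb₂) (sub_nonneg.mpr hc₂)]

theorem cyclic_products_eq {R : Type*} [CommRing R] (Ii Ij Ik ai aj ak xi xj xk : R) :
    (ak * xj + Ii * aj * xk) * (ai * xk + Ij * ak * xi) * (aj * xi + Ik * ai * xj)
      + (aj * xk + Ii * ak * xj) * (ak * xi + Ij * ai * xk) * (ai * xj + Ik * aj * xi)
    = (Ii + Ij * Ik) * (ai * xi * (ak ^ 2 * xj ^ 2 + aj ^ 2 * xk ^ 2))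
      + (Ij + Ik * Ii) * (aj * xj * (ai ^ 2 * xk ^ 2 + ak ^ 2 * xi ^ 2))
      + (Ik + Ii * Ij) * (ak * xk * (aj ^ 2 * xi ^ 2 + ai ^ 2 * xj ^ 2))
      + 2 * (1 + Ii * Ij * Ik) * (ai * aj * ak * xi * xj * xk) := by
  ring

theorem det_M_pos_general
    (Ii Ij Ik ai aj ak xi xj xk : ℝ)
    (hIi : Ii ∈ Set.Ioc (-1 : ℝ) 1) (hIj : Ij ∈ Set.Ioc (-1 : ℝ) 1) (hIk : Ik ∈ Set.Ioc (-1 : ℝ) 1)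
    (hγi : 0 ≤ Ii + Ij * Ik) (hγj : 0 ≤ Ij + Ik * Ii) (hγk : 0 ≤ Ik + Ii * Ij)
    (hai : 1 ≤ ai) (haj : 1 ≤ aj) (hak : 1 ≤ ak)
    (hxi : 0 < xi) (hxj : 0 < xj) (hxk : 0 < xk) :
    0 < Matrix.det !![(0 : ℝ), ak * xj + Ii * aj * xk, aj * xk + Ii * ak * xj;
                      ak * xi + Ij * ai * xk, 0, ai * xk + Ij * ak * xi;
                      aj * xi + Ik * ai * xj, ai * xj + Ik * aj * xi, 0] := by
  rw [det_fin_three_of_diag_eq_zero, cyclic_products_eq]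
  have hai₀ : 0 < ai := zero_lt_one.trans_le hai
  have haj₀ : 0 < aj := zero_lt_one.trans_le haj
  have hak₀ : 0 < ak := zero_lt_one.trans_le hak
  have hI := one_add_mul_mul_pos hIi hIj hIk
  have hZi : 0 ≤ ai * xi * (ak ^ 2 * xj ^ 2 + aj ^ 2 * xk ^ 2) := by positivity
  have hZj : 0 ≤ aj * xj * (ai ^ 2 * xk ^ 2 + ak ^ 2 * xi ^ 2) := by positivity
  have hZk : 0 ≤ ak * xk * (aj ^ 2 * xi ^ 2 + ai ^ 2 * xj ^ 2) := by positivity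
  have hmixed : 0 < 2 * (1 + Ii * Ij * Ik) * (ai * aj * ak * xi * xj * xk) := by positivity
  have := mul_nonneg hγi hZi
  have := mul_nonneg hγj hZj
  have := mul_nonneg hγk hZk
  linarith

theorem det_M_pos
    (Ii Ij Ik ai aj ak xi xj xk : ℝ)
    (hIi : Ii ∈ Set.Ioc (-1 : ℝ) 1) (hIj : Ij ∈ Set.Ioc (-1 : ℝ) 1) (hIk : Ik ∈ Set.Ioc (-1 : ℝ) 1)
    (hγi : 0 ≤ Ii + Ij * Ik) (hγj : 0 ≤ Ij + Ik * Ii) (hγk : 0 ≤ Ik + Ii * Ij)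
    (hai : 1 ≤ ai) (haj : 1 ≤ aj) (hak : 1 ≤ ak)
    (hxi : 0 < xi) (hxj : 0 < xj) (hxk : 0 < xk)
    (hi : ai ^ 2 - xi ^ 2 = 1) (hj : aj ^ 2 - xj ^ 2 = 1) (hk : ak ^ 2 - xk ^ 2 = 1) :
    0 < Matrix.det !![(0 : ℝ), ak * xj + Ii * aj * xk, aj * xk + Ii * ak * xj;
                      ak * xi + Ij * ai * xk, 0, ai * xk + Ij * ak * xi;
                      aj * xi + Ik * ai * xj, ai * xj + Ik * aj * xi, 0] :=
  det_M_pos_general Ii Ij Ik ai aj ak xi xj xk hIi hIj hIk hγi hγj hγk hai haj hak hxi hxj hxk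
end

section
/- Let Θ ∈ (0, π) be fixed and consider the degenerate two-circle configuration: ϑ_i, ϑ_j ∈ (0, π) with ϑ_i + ϑ_j + Θ < π determine r_i, r_j > 0 by cosh r_i = (cos ϑ_j − cos Θ cos ϑ_i)/(sin Θ sin ϑ_i) and cosh r_j = (cos ϑ_i − cos Θ cos ϑ_j)/(sin Θ sin ϑ_j). Then the map (ϑ_i, ϑ_j) ↦ (r_i, r_j) is injective on the domain where the right-hand sides exceed 1. -/
open Real

/-- Inverse hyperbolic cosine (for `x ≥ 1`). -/
noncomputable def arcosh (x : ℝ) : ℝ := Real.log (x + Real.sqrt (x ^ 2 - 1))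

/-- The hyperbolic cosine of the radius `r_i`, as a function of the two inner
angles `(ϑi, ϑj)` in the degenerate two-circle configuration with fixed
exterior intersection angle `Θ` (second hyperbolic cosine law). -/
noncomputable def coshRadius (Θ ϑi ϑj : ℝ) : ℝ :=
  (Real.cos ϑj - Real.cos Θ * Real.cos ϑi) / (Real.sin Θ * Real.sin ϑi)

/-!
Write `a = cosh r_i`, `b = cosh r_j`, so that `√(a ^ 2 - 1) = sinh r_i` and `√(b ^ 2 - 1) = sinh r_j`.
Combining the two cosine laws with `sin² + cos² = 1` gives the sine law `sinh r_j sin ϑ_j = sinh r_i sin ϑ_i`,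
and substituting it back gives
`sin Θ sinh r_j cot ϑ_i = cos Θ cosh r_i sinh r_j + cosh r_j sinh r_i`.
So the radii determine `cot ϑ_i` and `cot ϑ_j`, which are injective on `(0, π)`.
-/

open Set

section CosineLaw

variable {Θ x y a b : ℝ}

lemma sq_sub_one_mul_sin_sq_eq (hΘ : sin Θ ≠ 0)
    (ha : cos y - cos Θ * cos x = a * (sin Θ * sin x))
    (hb : cos x - cos Θ * cos y = b * (sin Θ * sin y)) :
    (b ^ 2 - 1) * sin y ^ 2 = (a ^ 2 - 1) * sin x ^ 2 := by
  refine mul_left_cancel₀ (pow_ne_zero 2 hΘ) ?_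
  linear_combination (a * sin Θ * sin x + cos y - cos Θ * cos x) * ha
    - (b * sin Θ * sin y + cos x - cos Θ * cos y) * hb
    - (cos x ^ 2 - cos y ^ 2) * sin_sq_add_cos_sq Θ
    + sin Θ ^ 2 * (sin_sq_add_cos_sq x - sin_sq_add_cos_sq y)

lemma sqrt_sq_sub_one_mul_sin_eq (hΘ : sin Θ ≠ 0) (hx : 0 ≤ sin x) (hy : 0 ≤ sin y)
    (ha : cos y - cos Θ * cos x = a * (sin Θ * sin x))
    (hb : cos x - cos Θ * cos y = b * (sin Θ * sin y)) :
    √(b ^ 2 - 1) * sin y = √(a ^ 2 - 1) * sin x := by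
  have key := congrArg (√·) (sq_sub_one_mul_sin_sq_eq hΘ ha hb)
  rwa [sqrt_mul' _ (sq_nonneg _), sqrt_mul' _ (sq_nonneg _), sqrt_sq hx, sqrt_sq hy] at key

lemma sin_mul_cos_sub_eq (hΘ : sin Θ ≠ 0)
    (ha : cos y - cos Θ * cos x = a * (sin Θ * sin x))
    (hb : cos x - cos Θ * cos y = b * (sin Θ * sin y)) :
    sin Θ * cos x - cos Θ * a * sin x = b * sin y := by
  refine mul_left_cancel₀ hΘ ?_
  linear_combination hb + cos Θ * ha + cos x * sin_sq_add_cos_sq Θ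

lemma sqrt_mul_sin_mul_cos_eq (hΘ : sin Θ ≠ 0) (hx : 0 ≤ sin x) (hy : 0 ≤ sin y)
    (ha : cos y - cos Θ * cos x = a * (sin Θ * sin x))
    (hb : cos x - cos Θ * cos y = b * (sin Θ * sin y)) :
    √(b ^ 2 - 1) * sin Θ * cos x = (cos Θ * a * √(b ^ 2 - 1) + b * √(a ^ 2 - 1)) * sin x := by
  linear_combination √(b ^ 2 - 1) * sin_mul_cos_sub_eq hΘ ha hb
    + b * sqrt_sq_sub_one_mul_sin_eq hΘ hx hy ha hb

end CosineLaw

lemma sub_eq_coshRadius_mul (Θ : ℝ) {x : ℝ} (y : ℝ) (hΘ : sin Θ ≠ 0) (hx : sin x ≠ 0) :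
    cos y - cos Θ * cos x = coshRadius Θ x y * (sin Θ * sin x) :=
  (div_mul_cancel₀ _ (mul_ne_zero hΘ hx)).symm

lemma sqrt_mul_sin_mul_cos_eq_coshRadius {Θ x y : ℝ} (hΘ : Θ ∈ Ioo 0 π) (hx : x ∈ Ioo 0 π)
    (hy : y ∈ Ioo 0 π) :
    √(coshRadius Θ y x ^ 2 - 1) * sin Θ * cos x =
      (cos Θ * coshRadius Θ x y * √(coshRadius Θ y x ^ 2 - 1)
        + coshRadius Θ y x * √(coshRadius Θ x y ^ 2 - 1)) * sin x := by
  have hsΘ := (sin_pos_of_mem_Ioo hΘ).ne'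
  have hsx := sin_pos_of_mem_Ioo hx
  have hsy := sin_pos_of_mem_Ioo hy
  exact sqrt_mul_sin_mul_cos_eq hsΘ hsx.le hsy.le (sub_eq_coshRadius_mul Θ y hsΘ hsx.ne')
    (sub_eq_coshRadius_mul Θ x hsΘ hsy.ne')

lemma eq_of_mul_cos_eq_mul_sin {x y K L : ℝ} (hx : x ∈ Ioo 0 π) (hy : y ∈ Ioo 0 π)
    (hK : K ≠ 0) (hxKL : K * cos x = L * sin x) (hyKL : K * cos y = L * sin y) : x = y := by
  have hsin : K * sin (x - y) = 0 := by
    rw [sin_sub]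
    linear_combination sin x * hyKL - sin y * hxKL
  have := (sin_eq_zero_iff_of_lt_of_lt (by linarith [hx.1, hy.2]) (by linarith [hx.2, hy.1])).mp
    ((mul_eq_zero.mp hsin).resolve_left hK)
  linarith

lemma eq_of_coshRadius_eq {Θ x y x' y' : ℝ} (hΘ : Θ ∈ Ioo 0 π) (hx : x ∈ Ioo 0 π)
    (hy : y ∈ Ioo 0 π) (hx' : x' ∈ Ioo 0 π) (hy' : y' ∈ Ioo 0 π) (hb : 1 < coshRadius Θ y x)
    (ha_eq : coshRadius Θ x y = coshRadius Θ x' y')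
    (hb_eq : coshRadius Θ y x = coshRadius Θ y' x') : x = x' := by
  have hK : √(coshRadius Θ y x ^ 2 - 1) * sin Θ ≠ 0 :=
    mul_ne_zero (sqrt_ne_zero'.mpr (by nlinarith)) (sin_pos_of_mem_Ioo hΘ).ne'
  have hx'KL := sqrt_mul_sin_mul_cos_eq_coshRadius hΘ hx' hy'
  rw [← ha_eq, ← hb_eq] at hx'KL
  exact eq_of_mul_cos_eq_mul_sin hx hx' hK (sqrt_mul_sin_mul_cos_eq_coshRadius hΘ hx hy) hx'KL

theorem two_circle_configuration_injective
    (Θ : ℝ) (hΘ : Θ ∈ Set.Ioo 0 π) :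
    Set.InjOn
      (fun p : ℝ × ℝ =>
        (_root_.arcosh (coshRadius Θ p.1 p.2), _root_.arcosh (coshRadius Θ p.2 p.1)))
      {p : ℝ × ℝ | p.1 ∈ Set.Ioo 0 π ∧ p.2 ∈ Set.Ioo 0 π ∧ p.1 + p.2 + Θ < π ∧
        1 < coshRadius Θ p.1 p.2 ∧ 1 < coshRadius Θ p.2 p.1} := by
  rintro p ⟨hp1, hp2, -, hpa, hpb⟩ q ⟨hq1, hq2, -, hqa, hqb⟩ h
  obtain ⟨hr1, hr2⟩ := Prod.mk.inj h
  -- `_root_.arcosh` unfolds to Mathlib's `Real.arcosh`.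
  have ha_eq := Real.arcosh_injOn hpa.le hqa.le hr1
  have hb_eq := Real.arcosh_injOn hpb.le hqb.le hr2
  exact Prod.ext (eq_of_coshRadius_eq hΘ hp1 hp2 hq1 hq2 hpb ha_eq hb_eq)
    (eq_of_coshRadius_eq hΘ hp2 hp1 hq2 hq1 hpa hb_eq ha_eq)
end
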